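/- Let (ψ,φ) be a reproducing pair of weakly measurable functions X → H. Then every bounded linear functional F on V_φ(X,μ) can be represented as F([ξ]_φ) = ∫_X ξ(x) conj(η(x)) dμ(x) for all [ξ]_φ ∈ V_φ(X,μ), with some η ∈ 𝒱_ψ(X,μ), and the residue class [η]_ψ ∈ V_ψ(X,μ) is uniquely determined by F. -/

import Mathlib

/-!
The coefficient map `C_ψ f = ⟨f, ψ(·)⟩` sends `H` into `𝒱_φ` with `T_φ C_ψ = S_{ψ,φ}`, so every
class of `V_φ` contains `C_ψ (S⁻¹ T_φ ξ)` and `‖C_ψ S⁻¹ f‖_φ ≤ ‖f‖`. Hence `f ↦ F(C_ψ S⁻¹ f)` is a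
bounded functional on `H`; if `h` is its Riesz vector, then `F ξ = ⟨T_φ ξ, h⟩ = ∫ ξ · conj(C_φ h)`,
and `η = C_φ h` lies in `𝒱_ψ` because `Ω_{ψ,φ}` is bounded. Uniqueness of `[η]_ψ` holds because the
pairing against the coefficients `C_ψ g` determines `⟨T_ψ η, g⟩`.
-/

open MeasureTheory Filter Topology
open scoped Classical ENNReal NNReal

noncomputable section

variable {H : Type*} [NormedAddCommGroup H] [InnerProductSpace ℂ H] [CompleteSpace H]
  [TopologicalSpace.SeparableSpace H]
variable {X : Type*} [TopologicalSpace X] [LocallyCompactSpace X] [MeasurableSpace X]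
  [BorelSpace X]

/-- Notation for the Mathlib inner product (conjugate-linear in the first slot);
the paper's inner product `⟨f, g⟩` (linear in the first slot) is `⟪g, f⟫`. -/
local notation "⟪" x ", " y "⟫" => @inner ℂ _ _ x y

/-- `φ : X → H` is weakly measurable: `x ↦ ⟨f, φ x⟩` is measurable for every `f ∈ H`. -/
def WeaklyMeasurable (φ : X → H) : Prop :=
  ∀ f : H, Measurable fun x => ⟪φ x, f⟫

/-- `ξ ∈ 𝒱_φ(X,μ)`: `ξ` is measurable, the integral `∫ ξ(x) ⟨φ(x), g⟩ dμ(x)` exists for all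
`g ∈ H`, and it defines a bounded conjugate-linear functional of `g`. -/
def MemV (μ : Measure X) (φ : X → H) (ξ : X → ℂ) : Prop :=
  Measurable ξ ∧ (∀ g : H, Integrable (fun x => ξ x * ⟪g, φ x⟫) μ) ∧
    ∃ c : ℝ, ∀ g : H, ‖∫ x, ξ x * ⟪g, φ x⟫ ∂μ‖ ≤ c * ‖g‖

/-- The map `T_φ : 𝒱_φ(X,μ) → H`, determined weakly by
`⟨T_φ ξ, g⟩ = ∫ ξ(x) ⟨φ(x), g⟩ dμ(x)` for all `g ∈ H` (junk value `0` off `𝒱_φ`). -/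
def Tmap (μ : Measure X) (φ : X → H) (ξ : X → ℂ) : H :=
  if h : MemV μ φ ξ then
    have key : ∀ g : H, Integrable (fun x => (starRingEnd ℂ) (ξ x) * ⟪φ x, g⟫) μ := by
      intro g
      have h2 : Integrable (fun x => (RCLike.conjLIE : ℂ ≃ₗᵢ[ℝ] ℂ) (ξ x * ⟪g, φ x⟫)) μ :=
        ((RCLike.conjLIE : ℂ ≃ₗᵢ[ℝ] ℂ).integrable_comp_iff).2 (h.2.1 g)
      simpa [RCLike.conjLIE_apply, map_mul] using h2
    (InnerProductSpace.toDual ℂ H).symm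
      (LinearMap.mkContinuousOfExistsBound
        { toFun := fun g => ∫ x, (starRingEnd ℂ) (ξ x) * ⟪φ x, g⟫ ∂μ
          map_add' := fun g g' => by
            simp only [inner_add_right, mul_add]
            exact integral_add (key g) (key g')
          map_smul' := fun c g => by
            simp only [inner_smul_right, RingHom.id_apply]
            calc ∫ x, (starRingEnd ℂ) (ξ x) * (c * ⟪φ x, g⟫) ∂μ
                = ∫ x, c * ((starRingEnd ℂ) (ξ x) * ⟪φ x, g⟫) ∂μ := by
                  simp only [mul_left_comm]
              _ = c * ∫ x, (starRingEnd ℂ) (ξ x) * ⟪φ x, g⟫ ∂μ := by rw [integral_const_mul] }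
        (by
          obtain ⟨c, hc⟩ := h.2.2
          refine ⟨c, fun g => ?_⟩
          have he : ∫ x, (starRingEnd ℂ) (ξ x) * ⟪φ x, g⟫ ∂μ
              = (starRingEnd ℂ) (∫ x, ξ x * ⟪g, φ x⟫ ∂μ) := by
            rw [← integral_conj]
            congr 1; funext x
            simp [map_mul]
          simp only [LinearMap.coe_mk, AddHom.coe_mk]
          rw [he, RCLike.norm_conj]
          exact hc g))
  else 0

/-- The norm `‖[ξ]_φ‖_φ = sup_{‖g‖ ≤ 1} |∫ ξ(x) ⟨φ(x), g⟩ dμ(x)|` (computed on a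
representative; it only depends on the class `[ξ]_φ = ξ + Ker T_φ`). -/
def Vnorm (μ : Measure X) (φ : X → H) (ξ : X → ℂ) : ℝ :=
  ⨆ g : {g : H // ‖g‖ ≤ 1}, ‖∫ x, ξ x * ⟪(g : H), φ x⟫ ∂μ‖

/-- The range of `T̂_φ : V_φ(X,μ) → H` (equivalently, of `T_φ` on `𝒱_φ(X,μ)`). -/
def Tran (μ : Measure X) (φ : X → H) : Set H := Tmap μ φ '' {ξ | MemV μ φ ξ}

/-- The analysis coefficient map: `(C_ψ f)(x) = ⟨f, ψ(x)⟩`. -/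
def Cpsi (ψ : X → H) (f : H) : X → ℂ := fun x => ⟪ψ x, f⟫

/-- `φ` is `μ`-total: `Ker C_φ = {0}`, i.e. if `∫ ξ(x) ⟨φ(x), f⟩ dμ(x) = 0` for every
`ξ ∈ 𝒱_φ(X,μ)`, then `f = 0`. -/
def MuTotal (μ : Measure X) (φ : X → H) : Prop :=
  ∀ f : H, (∀ ξ, MemV μ φ ξ → ∫ x, ξ x * ⟪f, φ x⟫ ∂μ = 0) → f = 0

/-- `S : H ≃L[ℂ] H` represents the sesquilinear form `Ω_{ψ,φ}`:
`⟨S f, g⟩ = ∫ ⟨f, ψ(x)⟩ ⟨φ(x), g⟩ dμ(x)` for all `f, g ∈ H`. -/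
def IsAnalysisOp (μ : Measure X) (ψ φ : X → H) (S : H ≃L[ℂ] H) : Prop :=
  ∀ f g : H, ⟪g, S f⟫ = ∫ x, ⟪ψ x, f⟫ * ⟪g, φ x⟫ ∂μ

/-- `(ψ, φ)` is a reproducing pair: both weakly measurable, the form
`Ω_{ψ,φ}(f,g) = ∫ ⟨f,ψ(x)⟩⟨φ(x),g⟩ dμ(x)` is well defined (integrable) and bounded, and the
associated bounded operator `S_{ψ,φ}` has a bounded everywhere-defined inverse. -/
def IsReproducingPair (μ : Measure X) (ψ φ : X → H) : Prop :=
  WeaklyMeasurable ψ ∧ WeaklyMeasurable φ ∧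
    (∀ f g : H, Integrable (fun x => ⟪ψ x, f⟫ * ⟪g, φ x⟫) μ) ∧
    ∃ S : H ≃L[ℂ] H, IsAnalysisOp μ ψ φ S

/-- Completeness of `V_φ(X,μ)` in the norm `‖·‖_φ`, phrased via representatives:
every `‖·‖_φ`-Cauchy sequence of elements of `𝒱_φ(X,μ)` converges in `‖·‖_φ`
to an element of `𝒱_φ(X,μ)`. -/
def VComplete (μ : Measure X) (φ : X → H) : Prop :=
  ∀ ξ : ℕ → X → ℂ, (∀ n, MemV μ φ (ξ n)) →
    (∀ ε : ℝ, 0 < ε → ∃ N, ∀ m ≥ N, ∀ n ≥ N, Vnorm μ φ (ξ m - ξ n) < ε) →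
    ∃ η, MemV μ φ η ∧ Tendsto (fun n => Vnorm μ φ (ξ n - η)) atTop (𝓝 0)

/-- `F` is (induced by) a bounded linear functional on `V_φ(X,μ)`: it is linear on `𝒱_φ(X,μ)`,
constant on the classes of `V_φ(X,μ) = 𝒱_φ(X,μ)/Ker T_φ`, and bounded for `‖·‖_φ`. -/
def IsBddLinearFunctional (μ : Measure X) (φ : X → H) (F : (X → ℂ) → ℂ) : Prop :=
  (∀ ξ η, MemV μ φ ξ → MemV μ φ η → F (ξ + η) = F ξ + F η) ∧
  (∀ (c : ℂ) ξ, MemV μ φ ξ → F (c • ξ) = c * F ξ) ∧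
  (∀ ξ η, MemV μ φ ξ → MemV μ φ η → Tmap μ φ (ξ - η) = 0 → F ξ = F η) ∧
  ∃ c : ℝ, ∀ ξ, MemV μ φ ξ → ‖F ξ‖ ≤ c * Vnorm μ φ ξ

/-- The dual norm `‖F‖_{φ*} = sup_{‖[ξ]_φ‖_φ ≤ 1} |F([ξ]_φ)|`. -/
def DualNorm (μ : Measure X) (φ : X → H) (F : (X → ℂ) → ℂ) : ℝ :=
  ⨆ ξ : {ξ : X → ℂ // MemV μ φ ξ ∧ Vnorm μ φ ξ ≤ 1}, ‖F ξ.1‖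

/-- `V_φ(X,μ)` and `V_ψ(X,μ)` are conjugate dual to each other with respect to the pairing
`⟨⟨ξ, η⟩⟩ = ∫ ξ(x) conj(η(x)) dμ(x)`: the pairing is well defined, each class `[η]_ψ` gives a
bounded linear functional on `V_φ(X,μ)`, and `[η]_ψ ↦ ⟨⟨·, η⟩⟩` is a bijection from `V_ψ(X,μ)`
onto the dual of `V_φ(X,μ)`. -/
def ConjDual (μ : Measure X) (φ ψ : X → H) : Prop :=
  (∀ ξ η, MemV μ φ ξ → MemV μ ψ η →
      Integrable (fun x => ξ x * (starRingEnd ℂ) (η x)) μ) ∧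
  (∀ η, MemV μ ψ η →
      IsBddLinearFunctional μ φ (fun ξ => ∫ x, ξ x * (starRingEnd ℂ) (η x) ∂μ)) ∧
  (∀ η η', MemV μ ψ η → MemV μ ψ η' →
      (∀ ξ, MemV μ φ ξ →
        ∫ x, ξ x * (starRingEnd ℂ) (η x) ∂μ = ∫ x, ξ x * (starRingEnd ℂ) (η' x) ∂μ) →
      Tmap μ ψ (η - η') = 0) ∧
  (∀ F, IsBddLinearFunctional μ φ F →
      ∃ η, MemV μ ψ η ∧ ∀ ξ, MemV μ φ ξ → F ξ = ∫ x, ξ x * (starRingEnd ℂ) (η x) ∂μ)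

section Coefficients

omit [CompleteSpace H] [TopologicalSpace.SeparableSpace H] [TopologicalSpace X]
  [LocallyCompactSpace X] [BorelSpace X]

variable {μ : Measure X}

theorem conj_integral_mul_conj (a b : X → ℂ) :
    (starRingEnd ℂ) (∫ x, a x * (starRingEnd ℂ) (b x) ∂μ)
      = ∫ x, b x * (starRingEnd ℂ) (a x) ∂μ := by
  rw [← integral_conj]
  simp only [map_mul, Complex.conj_conj, mul_comm]

theorem MemV.sub {φ : X → H} {ξ ζ : X → ℂ} (hξ : MemV μ φ ξ) (hζ : MemV μ φ ζ) :
    MemV μ φ (ξ - ζ) := by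
  obtain ⟨hξm, hξi, c₁, hc₁⟩ := hξ
  obtain ⟨hζm, hζi, c₂, hc₂⟩ := hζ
  have hsplit : ∀ g : H, ∫ x, (ξ - ζ) x * ⟪g, φ x⟫ ∂μ
      = ∫ x, ξ x * ⟪g, φ x⟫ ∂μ - ∫ x, ζ x * ⟪g, φ x⟫ ∂μ := fun g => by
    simp only [Pi.sub_apply, sub_mul]
    exact integral_sub (hξi g) (hζi g)
  refine ⟨hξm.sub hζm, fun g => ?_, c₁ + c₂, fun g => ?_⟩
  · simp only [Pi.sub_apply, sub_mul]
    exact (hξi g).sub (hζi g)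
  · rw [hsplit, add_mul]
    exact (norm_sub_le _ _).trans (add_le_add (hc₁ g) (hc₂ g))

def cpsiLinearMap (ψ : X → H) : H →ₗ[ℂ] X → ℂ where
  toFun := Cpsi ψ
  map_add' _ _ := funext fun _ => inner_add_right _ _ _
  map_smul' _ _ := funext fun _ => inner_smul_right _ _ _

theorem integral_mul_inner_eq_conj (ψ : X → H) (η : X → ℂ) (g : H) :
    ∫ x, η x * ⟪g, ψ x⟫ ∂μ = (starRingEnd ℂ) (∫ x, Cpsi ψ g x * (starRingEnd ℂ) (η x) ∂μ) := by
  simp only [conj_integral_mul_conj, Cpsi, inner_conj_symm]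

variable {ψ φ : X → H}

theorem Vnorm_nonneg (ξ : X → ℂ) : 0 ≤ Vnorm μ φ ξ :=
  Real.iSup_nonneg fun _ => norm_nonneg _

theorem IsReproducingPair.memV_Cpsi (h : IsReproducingPair μ ψ φ) (f : H) :
    MemV μ φ (Cpsi ψ f) := by
  obtain ⟨hψ, -, hint, S, hS⟩ := h
  refine ⟨hψ f, hint f, ‖S f‖, fun g => ?_⟩
  simp only [Cpsi]
  rw [← hS f g, mul_comm]
  exact norm_inner_le_norm _ _

-- The integrand is the pointwise conjugate of that of `Ω_{ψ,φ}(g, f) = ⟪f, S g⟫`.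
theorem IsReproducingPair.memV_Cpsi_swap (h : IsReproducingPair μ ψ φ) (f : H) :
    MemV μ ψ (Cpsi φ f) := by
  obtain ⟨-, hφ, hint, S, hS⟩ := h
  have hconj : ∀ g : H, (fun x => Cpsi φ f x * ⟪g, ψ x⟫)
      = fun x => (starRingEnd ℂ) (⟪ψ x, g⟫ * ⟪f, φ x⟫) := fun g => by
    funext x
    simp only [Cpsi, map_mul, inner_conj_symm, mul_comm]
  refine ⟨hφ f, fun g => ?_, ‖(S : H →L[ℂ] H)‖ * ‖f‖, fun g => ?_⟩
  · rw [hconj]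
    exact RCLike.conjCLE.toContinuousLinearMap.integrable_comp (hint g f)
  · rw [hconj, integral_conj, ← hS g f, RCLike.norm_conj, mul_right_comm]
    exact (norm_inner_le_norm _ _).trans
      (mul_le_mul_of_nonneg_left ((S : H →L[ℂ] H).le_opNorm g) (norm_nonneg f)) |>.trans_eq
        (by ring)

end Coefficients

section Synthesis

omit [TopologicalSpace.SeparableSpace H] [TopologicalSpace X] [LocallyCompactSpace X]
  [BorelSpace X]

variable {μ : Measure X} {φ : X → H}

theorem inner_Tmap {ξ : X → ℂ} (hξ : MemV μ φ ξ) (g : H) :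
    ⟪g, Tmap μ φ ξ⟫ = ∫ x, ξ x * ⟪g, φ x⟫ ∂μ := by
  have hdual : ⟪Tmap μ φ ξ, g⟫ = ∫ x, (starRingEnd ℂ) (ξ x) * ⟪φ x, g⟫ ∂μ := by
    rw [Tmap, dif_pos hξ, InnerProductSpace.toDual_symm_apply]
    rfl
  rw [← inner_conj_symm, hdual, ← integral_conj]
  simp only [map_mul, Complex.conj_conj, inner_conj_symm]

theorem Tmap_eq_of_forall_integral_eq {ξ ζ : X → ℂ} (hξ : MemV μ φ ξ) (hζ : MemV μ φ ζ)
    (h : ∀ g : H, ∫ x, ξ x * ⟪g, φ x⟫ ∂μ = ∫ x, ζ x * ⟪g, φ x⟫ ∂μ) :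
    Tmap μ φ ξ = Tmap μ φ ζ :=
  ext_inner_left ℂ fun g => by rw [inner_Tmap hξ, inner_Tmap hζ, h]

theorem Tmap_sub {ξ ζ : X → ℂ} (hξ : MemV μ φ ξ) (hζ : MemV μ φ ζ) :
    Tmap μ φ (ξ - ζ) = Tmap μ φ ξ - Tmap μ φ ζ := by
  refine ext_inner_left ℂ fun g => ?_
  rw [inner_sub_right, inner_Tmap (hξ.sub hζ), inner_Tmap hξ, inner_Tmap hζ,
    ← integral_sub (hξ.2.1 g) (hζ.2.1 g)]
  simp only [Pi.sub_apply, sub_mul]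

theorem Vnorm_le_norm_Tmap {ξ : X → ℂ} (hξ : MemV μ φ ξ) : Vnorm μ φ ξ ≤ ‖Tmap μ φ ξ‖ := by
  have : Nonempty {g : H // ‖g‖ ≤ 1} := ⟨⟨0, by simp⟩⟩
  refine ciSup_le fun g => ?_
  rw [← inner_Tmap hξ]
  exact (norm_inner_le_norm _ _).trans (mul_le_of_le_one_left (norm_nonneg _) g.2)

theorem Tmap_sub_eq_zero_of_forall_integral_Cpsi_eq {η η' : X → ℂ}
    (hη : MemV μ φ η) (hη' : MemV μ φ η')
    (h : ∀ g : H, ∫ x, Cpsi φ g x * (starRingEnd ℂ) (η x) ∂μ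
      = ∫ x, Cpsi φ g x * (starRingEnd ℂ) (η' x) ∂μ) :
    Tmap μ φ (η - η') = 0 := by
  rw [Tmap_sub hη hη', sub_eq_zero]
  exact Tmap_eq_of_forall_integral_eq hη hη' fun g => by
    rw [integral_mul_inner_eq_conj, integral_mul_inner_eq_conj, h]

theorem IsBddLinearFunctional.exists_forall_comp_eq_inner {F : (X → ℂ) → ℂ}
    (hF : IsBddLinearFunctional μ φ F) (L : H →ₗ[ℂ] X → ℂ) (hL : ∀ f, MemV μ φ (L f))
    (C : ℝ) (hC : ∀ f, Vnorm μ φ (L f) ≤ C * ‖f‖) :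
    ∃ h : H, ∀ f, F (L f) = ⟪h, f⟫ := by
  obtain ⟨hadd, hsmul, -, c, hc⟩ := hF
  let G : H →ₗ[ℂ] ℂ :=
    { toFun := fun f => F (L f)
      map_add' := fun f g => by simp only [map_add, hadd _ _ (hL f) (hL g)]
      map_smul' := fun a f => by simp only [map_smul, hsmul a _ (hL f), smul_eq_mul,
        RingHom.id_apply] }
  have hG : ∀ f, ‖G f‖ ≤ max c 0 * C * ‖f‖ := fun f => calc
    ‖F (L f)‖ ≤ c * Vnorm μ φ (L f) := hc _ (hL f)
    _ ≤ max c 0 * Vnorm μ φ (L f) := mul_le_mul_of_nonneg_right (le_max_left _ _) (Vnorm_nonneg _)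
    _ ≤ max c 0 * (C * ‖f‖) := mul_le_mul_of_nonneg_left (hC f) (le_max_right _ _)
    _ = max c 0 * C * ‖f‖ := by ring
  refine ⟨(InnerProductSpace.toDual ℂ H).symm (G.mkContinuous _ hG), fun f => ?_⟩
  rw [InnerProductSpace.toDual_symm_apply]
  rfl

variable {ψ : X → H}

theorem IsAnalysisOp.Tmap_Cpsi {S : H ≃L[ℂ] H} (h : IsReproducingPair μ ψ φ)
    (hS : IsAnalysisOp μ ψ φ S) (f : H) : Tmap μ φ (Cpsi ψ f) = S f :=
  ext_inner_left ℂ fun g => by rw [inner_Tmap (h.memV_Cpsi f), hS]; rfl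

-- `ξ` and `C_ψ S⁻¹ T_φ ξ` have the same image under `T_φ`, since `T_φ C_ψ = S`.
theorem IsBddLinearFunctional.apply_eq_apply_Cpsi {F : (X → ℂ) → ℂ} {S : H ≃L[ℂ] H}
    (hF : IsBddLinearFunctional μ φ F) (h : IsReproducingPair μ ψ φ)
    (hS : IsAnalysisOp μ ψ φ S) {ξ : X → ℂ} (hξ : MemV μ φ ξ) :
    F ξ = F (Cpsi ψ (S.symm (Tmap μ φ ξ))) :=
  hF.2.2.1 _ _ hξ (h.memV_Cpsi _) <| by
    rw [Tmap_sub hξ (h.memV_Cpsi _), hS.Tmap_Cpsi h, S.apply_symm_apply, sub_self]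

end Synthesis

theorem statement7_general (μ : Measure X) (ψ φ : X → H)
    (h : IsReproducingPair μ ψ φ) (F : (X → ℂ) → ℂ)
    (hF : IsBddLinearFunctional μ φ F) :
    ∃ η, MemV μ ψ η ∧
      (∀ ξ, MemV μ φ ξ → Integrable (fun x => ξ x * (starRingEnd ℂ) (η x)) μ ∧
        F ξ = ∫ x, ξ x * (starRingEnd ℂ) (η x) ∂μ) ∧
      ∀ η', MemV μ ψ η' →
        (∀ ξ, MemV μ φ ξ → F ξ = ∫ x, ξ x * (starRingEnd ℂ) (η' x) ∂μ) →
        Tmap μ ψ (η' - η) = 0 := by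
  obtain ⟨S, hS⟩ := h.2.2.2
  obtain ⟨h₀, hh₀⟩ := hF.exists_forall_comp_eq_inner
    (cpsiLinearMap ψ ∘ₗ S.symm.toLinearEquiv.toLinearMap)
    (fun f => h.memV_Cpsi _) 1 fun f => by
      simpa [cpsiLinearMap, hS.Tmap_Cpsi h] using Vnorm_le_norm_Tmap (h.memV_Cpsi (S.symm f))
  have hconj : ∀ x, (starRingEnd ℂ) (Cpsi φ h₀ x) = ⟪h₀, φ x⟫ := fun x => inner_conj_symm _ _
  have hrep : ∀ ξ, MemV μ φ ξ → F ξ = ∫ x, ξ x * (starRingEnd ℂ) (Cpsi φ h₀ x) ∂μ :=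
    fun ξ hξ => by
      rw [hF.apply_eq_apply_Cpsi h hS hξ]
      simpa [cpsiLinearMap, hconj, inner_Tmap hξ] using hh₀ (Tmap μ φ ξ)
  refine ⟨Cpsi φ h₀, h.memV_Cpsi_swap h₀, fun ξ hξ => ⟨?_, hrep ξ hξ⟩, fun η' hη' hrep' => ?_⟩
  · simpa only [hconj] using hξ.2.1 h₀
  · exact Tmap_sub_eq_zero_of_forall_integral_Cpsi_eq hη' (h.memV_Cpsi_swap h₀) fun g => by
      rw [← hrep' _ (h.memV_Cpsi g), ← hrep _ (h.memV_Cpsi g)]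

/-- Let `(ψ,φ)` be a reproducing pair. Then every bounded linear functional
`F` on `V_φ(X,μ)` can be represented as `F([ξ]_φ) = ∫ ξ(x) conj(η(x)) dμ(x)` with some
`η ∈ 𝒱_ψ(X,μ)`, and the residue class `[η]_ψ ∈ V_ψ(X,μ)` is uniquely determined. -/
theorem statement7 (μ : Measure X) [μ.Regular] (ψ φ : X → H)
    (h : IsReproducingPair μ ψ φ) (F : (X → ℂ) → ℂ)
    (hF : IsBddLinearFunctional μ φ F) :
    ∃ η, MemV μ ψ η ∧
      (∀ ξ, MemV μ φ ξ → Integrable (fun x => ξ x * (starRingEnd ℂ) (η x)) μ ∧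
        F ξ = ∫ x, ξ x * (starRingEnd ℂ) (η x) ∂μ) ∧
      ∀ η', MemV μ ψ η' →
        (∀ ξ, MemV μ φ ξ → F ξ = ∫ x, ξ x * (starRingEnd ℂ) (η' x) ∂μ) →
        Tmap μ ψ (η' - η) = 0 :=
  statement7_general μ ψ φ h F hF
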